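/- Let q be an odd prime power and L_u a finite field extension of the rational function field F̄_q(u) over the algebraic closure of F_q. Then there exists α ∈ F̄_q such that u − α is not a square in L_u. -/

import Mathlib

/-!
If every `u - α` were a square in `L`, then `L` would contain the quadratic extensions
`K(√(u - α))` of `K = F̄_q(u)` for all the infinitely many `α ∈ F̄_q`. These are separable
(the characteristic is odd), so they lie in the separable closure of `K` in `L`, a finite
separable extension, which has only finitely many intermediate fields. Hence
`K(√(u - α)) = K(√(u - β))` for some `α ≠ β`, and then `u - β` or `(u - α)(u - β)` is a square
in `K`; both are excluded because these polynomials are squarefree and `F̄_q[u]` is integrally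
closed.
-/

open Polynomial IntermediateField

theorem not_isSquare_algebraMap_of_squarefree {R K : Type*} [CommRing R] [IsIntegrallyClosed R] [Field K]
    [Algebra R K] [IsFractionRing R K] {f : R}
    (hf : Squarefree f) (hu : ¬ IsUnit f) : ¬ IsSquare (algebraMap R K f) := by
  rintro ⟨g, hg⟩
  have hg_int : IsIntegral R g :=
    ⟨X ^ 2 - C f, monic_X_pow_sub_C f two_ne_zero, by simp [hg, sq]⟩
  obtain ⟨r, rfl⟩ := IsIntegrallyClosed.isIntegral_iff.mp hg_int
  have hfr : f = r * r := IsFractionRing.injective R K (by rw [hg, map_mul])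
  have hr : IsUnit r := hf r (hfr ▸ dvd_rfl)
  exact hu (hfr ▸ hr.mul hr)

namespace RatFunc

variable {F : Type*} [Field F]

theorem X_sub_C_eq_algebraMap (α : F) :
    (X - C α : RatFunc F) = algebraMap F[X] (RatFunc F) (Polynomial.X - Polynomial.C α) := by
  rw [map_sub, algebraMap_X, algebraMap_C]

theorem not_isSquare_X_sub_C (α : F) : ¬ IsSquare (X - C α : RatFunc F) := by
  rw [X_sub_C_eq_algebraMap]
  exact not_isSquare_algebraMap_of_squarefree (irreducible_X_sub_C α).squarefree
    (not_isUnit_X_sub_C α)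

theorem not_isSquare_X_sub_C_mul_X_sub_C {α β : F} (hαβ : α ≠ β) :
    ¬ IsSquare ((X - C α) * (X - C β) : RatFunc F) := by
  rw [X_sub_C_eq_algebraMap, X_sub_C_eq_algebraMap, ← map_mul]
  have hcop : IsCoprime (Polynomial.X - Polynomial.C α) (Polynomial.X - Polynomial.C β) :=
    isCoprime_X_sub_C_of_isUnit_sub (sub_ne_zero.mpr hαβ).isUnit
  exact not_isSquare_algebraMap_of_squarefree
    (separable_X_sub_C.mul separable_X_sub_C hcop).squarefree
    fun hu => not_isUnit_X_sub_C α (isUnit_of_mul_isUnit_left hu)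

end RatFunc

theorem exists_eq_add_mul_of_mem_adjoin_of_sq_eq {R A : Type*} [CommRing R] [CommRing A]
    [Algebra R A] {c : R} {y z : A} (hy : y ^ 2 = algebraMap R A c)
    (hz : z ∈ Algebra.adjoin R {y}) :
    ∃ a b : R, z = algebraMap R A a + algebraMap R A b * y := by
  induction hz using Algebra.adjoin_induction with
  | mem x hx => exact ⟨0, 1, by simp [Set.mem_singleton_iff.mp hx]⟩
  | algebraMap r => exact ⟨r, 0, by simp⟩
  | add x x' _ _ hx hx' =>
    obtain ⟨a, b, rfl⟩ := hx
    obtain ⟨a', b', rfl⟩ := hx'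
    exact ⟨a + a', b + b', by simp only [map_add]; ring⟩
  | mul x x' _ _ hx hx' =>
    obtain ⟨a, b, rfl⟩ := hx
    obtain ⟨a', b', rfl⟩ := hx'
    refine ⟨a * a' + b * b' * c, a * b' + a' * b, ?_⟩
    simp only [map_add, map_mul]
    linear_combination algebraMap R A b * algebraMap R A b' * hy

theorem isSquare_or_isSquare_mul_of_mem_adjoin {K E : Type*} [Field K] [Field E] [Algebra K E]
    (h2 : (2 : K) ≠ 0) {c d : K} (hc : ¬ IsSquare c) {y z : E}
    (hy : y ^ 2 = algebraMap K E c) (hz : z ^ 2 = algebraMap K E d) (hzy : z ∈ K⟮y⟯) :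
    IsSquare d ∨ IsSquare (c * d) := by
  have hy_int : IsIntegral K y :=
    ⟨X ^ 2 - C c, monic_X_pow_sub_C c two_ne_zero, by simp [hy]⟩
  rw [← mem_toSubalgebra, adjoin_simple_toSubalgebra_of_isAlgebraic hy_int.isAlgebraic] at hzy
  obtain ⟨a, b, rfl⟩ := exists_eq_add_mul_of_mem_adjoin_of_sq_eq hy hzy
  have hinj := (algebraMap K E).injective
  have hlin : algebraMap K E (2 * a * b) * y = algebraMap K E (d - a ^ 2 - b ^ 2 * c) := by
    simp only [map_mul, map_sub, map_pow, map_ofNat]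
    linear_combination hz - algebraMap K E b ^ 2 * hy
  by_cases ha : a = 0
  · have hd : d = b ^ 2 * c :=
      hinj (by rw [← hz, map_mul, map_pow, ← hy, ha, map_zero, zero_add]; ring)
    exact .inr ⟨b * c, by rw [hd]; ring⟩
  by_cases hb : b = 0
  · refine .inl ⟨a, hinj ?_⟩
    rw [← hz, hb]
    simp [sq]
  refine absurd ⟨(d - a ^ 2 - b ^ 2 * c) / (2 * a * b), hinj ?_⟩ hc
  have hab : algebraMap K E (2 * a * b) ≠ 0 := by simp [h2, ha, hb]
  have hy' : y = algebraMap K E ((d - a ^ 2 - b ^ 2 * c) / (2 * a * b)) := by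
    rw [map_div₀, eq_div_iff hab, mul_comm, hlin]
  rw [map_mul, ← hy', ← hy, sq]

theorem isSeparable_of_sq_eq_algebraMap {K E : Type*} [Field K] [Field E] [Algebra K E]
    (h2 : (2 : K) ≠ 0) {c : K} (hc : c ≠ 0) {y : E} (hy : y ^ 2 = algebraMap K E c) :
    IsSeparable K y :=
  (separable_X_pow_sub_C c (by exact_mod_cast h2) hc).of_dvd (minpoly.dvd K y (by simp [hy]))

theorem exists_not_isSquare_algebraMap {K L ι : Type*} [Field K] [Field L] [Algebra K L]
    [FiniteDimensional K L] [Infinite ι] (h2 : (2 : K) ≠ 0) (f : ι → K)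
    (hf : ∀ i, ¬ IsSquare (f i)) (hff : Pairwise fun i j => ¬ IsSquare (f i * f j)) :
    ∃ i, ¬ IsSquare (algebraMap K L (f i)) := by
  by_contra! h
  choose s hs using h
  have hs2 (i : ι) : s i ^ 2 = algebraMap K L (f i) := by rw [hs, sq]
  have hf0 (i : ι) : f i ≠ 0 := fun h0 => hf i (h0 ▸ IsSquare.zero)
  let E := separableClosure K L
  have hsE (i : ι) : s i ∈ E :=
    mem_separableClosure_iff.mpr (isSeparable_of_sq_eq_algebraMap h2 (hf0 i) (hs2 i))
  let y (i : ι) : E := ⟨s i, hsE i⟩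
  have hy (i : ι) : y i ^ 2 = algebraMap K E (f i) := Subtype.ext (hs2 i)
  have : Finite (IntermediateField K E) :=
    Field.finite_intermediateField_of_exists_primitive_element K E
      (Field.exists_primitive_element K E)
  obtain ⟨i, j, hij, heq⟩ := Finite.exists_ne_map_eq_of_infinite fun i => K⟮y i⟯
  have hyj : y j ∈ K⟮y i⟯ := heq ▸ mem_adjoin_simple_self K (y j)
  rcases isSquare_or_isSquare_mul_of_mem_adjoin h2 (hf i) (hy i) (hy j) hyj with h | h
  · exact hf j h
  · exact hff hij h

theorem RatFunc.exists_not_isSquare_algebraMap_X_sub_C {F : Type*} [Field F] [Infinite F]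
    (h2 : (2 : F) ≠ 0) (L : Type*) [Field L] [Algebra (RatFunc F) L]
    [FiniteDimensional (RatFunc F) L] :
    ∃ α : F, ¬ IsSquare (algebraMap (RatFunc F) L (X - C α)) := by
  have h2' : (2 : RatFunc F) ≠ 0 := by
    simpa only [map_ofNat] using (map_ne_zero (algebraMap F (RatFunc F))).mpr h2
  exact exists_not_isSquare_algebraMap h2' (fun α => X - C α) not_isSquare_X_sub_C
    fun _ _ => not_isSquare_X_sub_C_mul_X_sub_C

theorem exists_nonsquare_linear_general (p k : ℕ) [Fact p.Prime] (hp : Odd p)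
    (Fbar : Type*) [Field Fbar] [Algebra (GaloisField p k) Fbar]
    [IsAlgClosure (GaloisField p k) Fbar]
    (L : Type*) [Field L] [Algebra (RatFunc Fbar) L] [FiniteDimensional (RatFunc Fbar) L] :
    ∃ α : Fbar, ¬ IsSquare (algebraMap (RatFunc Fbar) L (RatFunc.X - RatFunc.C α)) := by
  have : IsAlgClosed Fbar := IsAlgClosure.isAlgClosed (GaloisField p k)
  have : CharP Fbar p :=
    charP_of_injective_algebraMap (algebraMap (GaloisField p k) Fbar).injective p
  have hp2 : p ≠ 2 := by
    rintro rfl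
    exact Nat.not_odd_iff_even.mpr even_two hp
  exact RatFunc.exists_not_isSquare_algebraMap_X_sub_C
    (Ring.two_ne_zero (ringChar.eq Fbar p ▸ hp2)) L

/-- Let `q = p^k` be an odd prime power, `F̄_q` an algebraic closure of `F_q`, and
`L_u` a finite extension of the rational function field `F̄_q(u)`. Then there
exists `α ∈ F̄_q` such that `u − α` is not a square in `L_u`. -/
theorem exists_nonsquare_linear (p k : ℕ) [Fact p.Prime] (hp : Odd p) (hk : 0 < k)
    (Fbar : Type*) [Field Fbar] [Algebra (GaloisField p k) Fbar]
    [IsAlgClosure (GaloisField p k) Fbar]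
    (L : Type*) [Field L] [Algebra (RatFunc Fbar) L] [FiniteDimensional (RatFunc Fbar) L] :
    ∃ α : Fbar, ¬ IsSquare (algebraMap (RatFunc Fbar) L (RatFunc.X - RatFunc.C α)) :=
  exists_nonsquare_linear_general p k hp Fbar L
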